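/- Fix K ∈ ℕ, positive constants T, a, s, B, and for each k = 1,…,K positive constants A_k, f_k, c_k. Define φ_k(η) = (1−η)·T/a + (A_k/f_k)·log₂ η for η ∈ (0,1), and v_k(η) = s/φ_k(η) where φ_k(η) > 0. For each k let u_k : (0, c_k/ln 2) → (0,∞) be the inverse function of b ↦ b·log₂(1 + c_k/b). Let F(T) be the set of all (t, b, η) ∈ ℝ^K × ℝ^K × ℝ satisfying: (a) t_k ≤ φ_k(η) for all k; (b) t_k·b_k·log₂(1 + c_k/b_k) ≥ s for all k; (c) ∑_{k=1}^K b_k ≤ B; (d) 0 < η < 1; (e) t_k > 0 and b_k > 0 for all k. Then F(T) is nonempty if and only if there exists η ∈ (0,1) such that, for all k, φ_k(η) > 0 and v_k(η) < c_k/ln 2, and ∑_{k=1}^K u_k(v_k(η)) ≤ B. -/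

import Mathlib

open scoped BigOperators

/-- Maximal transmission time allowed at accuracy `η`: `φ(η) = (1-η)T/a + (A/f)·log₂ η`. -/
noncomputable def phi (T a A f η : ℝ) : ℝ := (1 - η) * T / a + A / f * Real.logb 2 η

/-- Feasibility of `(t, b, η)` for the reduced delay-minimization constraints (12a)–(12e). -/
def RedFeasible (K : ℕ) (T a s B : ℝ) (A f c : Fin K → ℝ)
    (t b : Fin K → ℝ) (η : ℝ) : Prop :=
  (∀ k, t k ≤ phi T a (A k) (f k) η) ∧
  (∀ k, s ≤ t k * (b k * Real.logb 2 (1 + c k / b k))) ∧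
  (∑ k, b k ≤ B) ∧
  (0 < η ∧ η < 1) ∧
  (∀ k, 0 < t k) ∧
  (∀ k, 0 < b k)

/-!
The rate `z_c(b) = b log₂(1 + c/b)` is continuous on `(0, ∞)`, tends to `0` as `b → 0⁺` and to
`c / ln 2` as `b → ∞`, and stays below `c / ln 2`. By the intermediate value theorem every demand
`v ∈ (0, z_c(b)]` is met by some bandwidth in `(0, b]`, so any left inverse `u` of `z_c` satisfies
`u(v) ≤ b` without any appeal to monotonicity. A feasible `(t, b, η)` has
`v_k(η) = s/φ_k(η) ≤ s/t_k ≤ z_{c_k}(b_k)`, whence `u_k(v_k(η)) ≤ b_k`; conversely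
`t_k = φ_k(η)`, `b_k = u_k(v_k(η))` is feasible.
-/

open Real Set Filter Topology

noncomputable def shannonRate (c b : ℝ) : ℝ := b * logb 2 (1 + c / b)

lemma shannonRate_eq_mul_log_div (c b : ℝ) : shannonRate c b = b * log (1 + c / b) / log 2 := by
  rw [shannonRate, logb, mul_div_assoc]

lemma shannonRate_lt_div_log_two {c b : ℝ} (hc : 0 < c) (hb : 0 < b) :
    shannonRate c b < c / log 2 := by
  have hcb : 0 < c / b := div_pos hc hb
  have hlog : log (1 + c / b) < c / b := by
    linarith [log_lt_sub_one_of_pos (by positivity : 0 < 1 + c / b) (by linarith)]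
  rw [shannonRate_eq_mul_log_div]
  gcongr
  calc b * log (1 + c / b) < b * (c / b) := by gcongr
    _ = c := mul_div_cancel₀ c hb.ne'

lemma continuousOn_shannonRate {c : ℝ} (hc : 0 ≤ c) : ContinuousOn (shannonRate c) (Ioi 0) := by
  have hpos : ∀ b ∈ Ioi (0 : ℝ), 1 + c / b ≠ 0 := fun b (hb : 0 < b) => by positivity
  exact continuousOn_id.mul ((continuousOn_const.add (continuousOn_const.div continuousOn_id
    fun b (hb : 0 < b) => hb.ne')).logb hpos)

lemma tendsto_shannonRate_nhdsGT_zero {c : ℝ} (hc : 0 < c) :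
    Tendsto (shannonRate c) (𝓝[>] 0) (𝓝 0) := by
  have hsplit : ∀ b ∈ Ioi (0 : ℝ),
      (b * log (b + c) - b * log b) / log 2 = shannonRate c b := fun b (hb : 0 < b) => by
    rw [shannonRate_eq_mul_log_div, ← mul_sub, ← log_div (by positivity) hb.ne', add_div,
      div_self hb.ne']
  have hcont : ContinuousAt (fun b => (b * log (b + c) - b * log b) / log 2) 0 :=
    ((continuousAt_id.mul ((continuous_add_const c).continuousAt.log (by simpa using hc.ne'))).sub
      continuous_mul_log.continuousAt).div_const _
  refine ((hcont.tendsto.mono_left nhdsWithin_le_nhds).congr' ?_).trans_eq (by simp)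
  exact eventually_nhdsWithin_of_forall hsplit

lemma tendsto_shannonRate_atTop (c : ℝ) :
    Tendsto (shannonRate c) atTop (𝓝 (c / log 2)) :=
  ((tendsto_mul_log_one_add_div_atTop c).div_const _).congr fun b =>
    (shannonRate_eq_mul_log_div c b).symm

lemma surjOn_shannonRate_Ioc {c b : ℝ} (hc : 0 < c) (hb : 0 < b) :
    SurjOn (shannonRate c) (Ioc 0 b) (Ioc 0 (shannonRate c b)) :=
  have := left_nhdsWithin_Ioc_neBot hb
  isPreconnected_Ioc.intermediate_value_Ioc (right_mem_Ioc.2 hb) (l := 𝓝[Ioc 0 b] 0)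
    inf_le_right ((continuousOn_shannonRate hc.le).mono Ioc_subset_Ioi_self)
    ((tendsto_shannonRate_nhdsGT_zero hc).mono_left (nhdsWithin_mono _ Ioc_subset_Ioi_self))

lemma surjOn_shannonRate_Ioi {c : ℝ} (hc : 0 < c) :
    SurjOn (shannonRate c) (Ioi 0) (Ioo 0 (c / log 2)) :=
  isPreconnected_Ioi.intermediate_value_Ioo (l₁ := 𝓝[>] 0) inf_le_right
    (le_principal_iff.2 (Ioi_mem_atTop 0)) (continuousOn_shannonRate hc.le) (tendsto_shannonRate_nhdsGT_zero hc)
    (tendsto_shannonRate_atTop c)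

section LeftInverse

variable {c : ℝ} {u : ℝ → ℝ}

lemma Set.LeftInvOn.le_of_le_shannonRate (hu : LeftInvOn u (shannonRate c) (Ioi 0)) (hc : 0 < c)
    {b v : ℝ} (hb : 0 < b) (hv : v ∈ Ioc 0 (shannonRate c b)) : u v ≤ b :=
  ((hu.mono Ioc_subset_Ioi_self).mapsTo (surjOn_shannonRate_Ioc hc hb) hv).2

lemma Set.LeftInvOn.pos_and_shannonRate_eq (hu : LeftInvOn u (shannonRate c) (Ioi 0)) (hc : 0 < c)
    {v : ℝ} (hv : v ∈ Ioo 0 (c / log 2)) : 0 < u v ∧ shannonRate c (u v) = v :=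
  ⟨hu.mapsTo (surjOn_shannonRate_Ioi hc) hv,
    hu.rightInvOn_image.mono (surjOn_shannonRate_Ioi hc) hv⟩

end LeftInverse

theorem redFeasible_iff_bandwidth_demand_general (K : ℕ) (T a s B : ℝ)
    (hs : 0 < s)
    (A f c : Fin K → ℝ) (hc : ∀ k, 0 < c k)
    (u : Fin K → ℝ → ℝ)
    (hu : ∀ k, ∀ b : ℝ, 0 < b → u k (b * Real.logb 2 (1 + c k / b)) = b) :
    (∃ (t b : Fin K → ℝ) (η : ℝ), RedFeasible K T a s B A f c t b η) ↔
    (∃ η : ℝ, (0 < η ∧ η < 1) ∧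
      (∀ k, 0 < phi T a (A k) (f k) η ∧
        s / phi T a (A k) (f k) η < c k / Real.log 2) ∧
      ∑ k, u k (s / phi T a (A k) (f k) η) ≤ B) := by
  have hinv (k : Fin K) : LeftInvOn (u k) (shannonRate (c k)) (Ioi 0) := fun b hb => hu k b hb
  constructor
  · rintro ⟨t, b, η, ht_le, hrate, hsum, hη, ht, hb⟩
    have hφ (k : Fin K) : 0 < phi T a (A k) (f k) η := (ht k).trans_le (ht_le k)
    have hdemand (k : Fin K) : s / phi T a (A k) (f k) η ∈ Ioc 0 (shannonRate (c k) (b k)) :=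
      ⟨div_pos hs (hφ k), (div_le_div_of_nonneg_left hs.le (ht k) (ht_le k)).trans
        ((div_le_iff₀' (ht k)).2 (hrate k))⟩
    refine ⟨η, hη, fun k => ⟨hφ k, (hdemand k).2.trans_lt
      (shannonRate_lt_div_log_two (hc k) (hb k))⟩, ?_⟩
    calc ∑ k, u k (s / phi T a (A k) (f k) η)
        ≤ ∑ k, b k := Finset.sum_le_sum fun k _ => (hinv k).le_of_le_shannonRate (hc k) (hb k)
          (hdemand k)
      _ ≤ B := hsum
  · rintro ⟨η, hη, hφ, hsum⟩
    have hb (k : Fin K) := (hinv k).pos_and_shannonRate_eq (hc k) ⟨div_pos hs (hφ k).1, (hφ k).2⟩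
    refine ⟨fun k => phi T a (A k) (f k) η, fun k => u k (s / phi T a (A k) (f k) η), η,
      fun k => le_rfl, fun k => ?_, hsum, hη, fun k => (hφ k).1, fun k => (hb k).1⟩
    change s ≤ _ * shannonRate (c k) _
    rw [(hb k).2, mul_div_cancel₀ s (hφ k).1.ne']

/-- **Lemma 4**: with `u_k` the inverse of the rate function `b ↦ b·log₂(1 + c_k/b)` and
`v_k(η) = s/φ_k(η)`, the reduced feasibility set `F(T)` is nonempty iff there exists
`η ∈ (0,1)` with `φ_k(η) > 0` and `v_k(η) < c_k/ln 2` for all `k`, and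
`∑_k u_k(v_k(η)) ≤ B`. -/
theorem redFeasible_iff_bandwidth_demand (K : ℕ) (T a s B : ℝ)
    (hT : 0 < T) (ha : 0 < a) (hs : 0 < s) (hB : 0 < B)
    (A f c : Fin K → ℝ) (hA : ∀ k, 0 < A k) (hf : ∀ k, 0 < f k) (hc : ∀ k, 0 < c k)
    (u : Fin K → ℝ → ℝ)
    (hu : ∀ k, ∀ b : ℝ, 0 < b → u k (b * Real.logb 2 (1 + c k / b)) = b) :
    (∃ (t b : Fin K → ℝ) (η : ℝ), RedFeasible K T a s B A f c t b η) ↔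
    (∃ η : ℝ, (0 < η ∧ η < 1) ∧
      (∀ k, 0 < phi T a (A k) (f k) η ∧
        s / phi T a (A k) (f k) η < c k / Real.log 2) ∧
      ∑ k, u k (s / phi T a (A k) (f k) η) ≤ B) :=
  redFeasible_iff_bandwidth_demand_general K T a s B hs A f c hc u hu
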